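/- arXiv:2410.22381 — 4 statements merged into one kernel-verified Lean document; each statement's English description precedes it below -/
import Mathlib

section
/- Let p and p̃ be probability density functions of univariate real random variables, let F̃ denote the cumulative distribution function of p̃, and for K ∈ ℕ and n ∈ {0,…,K} let Q_K(n) = ∫_ℝ C(K,n) · F̃(y)^n · (1 − F̃(y))^{K−n} · p(y) dy. If ‖p − p̃‖_{L¹(ℝ)} ≤ ε, then 1/(K+1) − ε ≤ Q_K(n) ≤ 1/(K+1) + ε for every n ∈ {0,…,K}. -/
/-
Under the law `μ` with density `p̃` the cdf `F̃` is continuous, so it pushes `μ` forward to the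
uniform distribution on `[0, 1]` (probability integral transform). Hence, for the Bernstein weight
`b(t) = C(K,n) tⁿ (1 - t)^(K-n)`, `∫ b(F̃) p̃ = ∫₀¹ b = 1/(K+1)` is a Beta integral. Since
`0 ≤ b ≤ 1` on `[0, 1]`, replacing `p̃` by `p` moves the integral by at most `‖p - p̃‖₁`.
-/

open MeasureTheory Set ProbabilityTheory
open scoped Nat

lemma integral_pow_mul_one_sub_pow_succ (n m : ℕ) :
    ∫ x in (0 : ℝ)..1, x ^ n * (1 - x) ^ (m + 1)
      = (m + 1) / (n + 1) * ∫ x in (0 : ℝ)..1, x ^ (n + 1) * (1 - x) ^ m := by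
  have hu (x : ℝ) : HasDerivAt (fun x : ℝ => (1 - x) ^ (m + 1)) (-((m + 1) * (1 - x) ^ m)) x := by
    simpa using ((hasDerivAt_id x).const_sub 1).fun_pow (m + 1)
  have hv (x : ℝ) : HasDerivAt (fun x : ℝ => x ^ (n + 1) / (n + 1)) (x ^ n) x :=
    ((hasDerivAt_pow (n + 1) x).div_const ((n : ℝ) + 1)).congr_deriv (by push_cast; field_simp)
  have hparts := intervalIntegral.integral_mul_deriv_eq_deriv_mul (a := 0) (b := 1)
    (fun x _ => hu x) (fun x _ => hv x) ((by fun_prop : Continuous _).intervalIntegrable _ _)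
    ((by fun_prop : Continuous _).intervalIntegrable _ _)
  calc ∫ x in (0 : ℝ)..1, x ^ n * (1 - x) ^ (m + 1)
      = ∫ x in (0 : ℝ)..1, (1 - x) ^ (m + 1) * x ^ n := by simp_rw [mul_comm]
    _ = -∫ x in (0 : ℝ)..1, -((m + 1) * (1 - x) ^ m) * (x ^ (n + 1) / (n + 1)) := by
      rw [hparts]; simp
    _ = _ := by
      rw [← intervalIntegral.integral_const_mul, ← intervalIntegral.integral_neg]
      congr 1
      ext x
      ring

lemma integral_pow_mul_one_sub_pow (n m : ℕ) :
    ∫ x in (0 : ℝ)..1, x ^ n * (1 - x) ^ m = n ! * m ! / (n + m + 1)! := by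
  induction m generalizing n with
  | zero =>
    simp_rw [pow_zero, mul_one, integral_pow, add_zero, one_pow, zero_pow n.succ_ne_zero,
      sub_zero, Nat.factorial_zero]
    push_cast [Nat.factorial_succ]
    field_simp
  | succ m ih =>
    rw [integral_pow_mul_one_sub_pow_succ, ih, show n + 1 + m + 1 = n + (m + 1) + 1 by ring]
    push_cast [Nat.factorial_succ]
    field_simp

lemma integral_choose_mul_pow_mul_one_sub_pow {K n : ℕ} (hn : n ≤ K) :
    ∫ x in (0 : ℝ)..1, (K.choose n : ℝ) * x ^ n * (1 - x) ^ (K - n) = 1 / (K + 1) := by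
  simp_rw [mul_assoc]
  rw [intervalIntegral.integral_const_mul, integral_pow_mul_one_sub_pow, Nat.add_sub_cancel' hn]
  have hfact : (K.choose n * n ! * (K - n)! : ℝ) = K ! := by
    exact_mod_cast Nat.choose_mul_factorial_mul_factorial hn
  have hchoose : (K.choose n : ℝ) ≠ 0 := Nat.cast_ne_zero.2 (Nat.choose_pos hn).ne'
  push_cast [Nat.factorial_succ]
  rw [← hfact]
  field_simp

lemma choose_mul_pow_mul_one_sub_pow_mem_Icc (K n : ℕ) {x : ℝ} (hx : x ∈ Icc 0 1) :
    (K.choose n : ℝ) * x ^ n * (1 - x) ^ (K - n) ∈ Icc 0 1 := by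
  have hterm_nonneg (k : ℕ) : 0 ≤ x ^ k * (1 - x) ^ (K - k) * K.choose k :=
    mul_nonneg (mul_nonneg (pow_nonneg hx.1 _) (pow_nonneg (sub_nonneg.2 hx.2) _))
      (Nat.cast_nonneg _)
  rw [show (K.choose n : ℝ) * x ^ n * (1 - x) ^ (K - n) = x ^ n * (1 - x) ^ (K - n) * K.choose n
    by ring]
  refine ⟨hterm_nonneg n, ?_⟩
  rcases le_or_gt n K with hn | hn
  · calc x ^ n * (1 - x) ^ (K - n) * K.choose n
        ≤ ∑ k ∈ Finset.range (K + 1), x ^ k * (1 - x) ^ (K - k) * K.choose k :=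
          Finset.single_le_sum (fun k _ => hterm_nonneg k) (Finset.mem_range.2 (by omega))
      _ = 1 := by rw [← add_pow, add_sub_cancel, one_pow]
  · simp [Nat.choose_eq_zero_of_lt hn]

namespace MeasureTheory

variable {α : Type*} [MeasurableSpace α] {μ : Measure α} {f : α → ℝ}

lemma isProbabilityMeasure_withDensity_ofReal (hf : 0 ≤ᵐ[μ] f) (hint : Integrable f μ)
    (h1 : ∫ x, f x ∂μ = 1) :
    IsProbabilityMeasure (μ.withDensity fun x => ENNReal.ofReal (f x)) := by
  constructor
  rw [withDensity_apply _ MeasurableSet.univ, Measure.restrict_univ,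
    ← ofReal_integral_eq_lintegral_ofReal hint hf, h1, ENNReal.ofReal_one]

lemma integral_withDensity_ofReal (hf : 0 ≤ᵐ[μ] f) (hfm : AEMeasurable f μ) (g : α → ℝ) :
    ∫ x, g x ∂μ.withDensity (fun x => ENNReal.ofReal (f x)) = ∫ x, g x * f x ∂μ := by
  rw [integral_withDensity_eq_integral_toReal_smul₀ hfm.ennreal_ofReal
    (ae_of_all _ fun _ => ENNReal.ofReal_lt_top)]
  refine integral_congr_ae ?_
  filter_upwards [hf] with x hx
  rw [ENNReal.toReal_ofReal hx, smul_eq_mul, mul_comm]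

lemma abs_integral_mul_sub_integral_mul_le {w f g : α → ℝ} (hw : AEStronglyMeasurable w μ)
    (hw1 : ∀ x, |w x| ≤ 1) (hf : Integrable f μ) (hg : Integrable g μ) :
    |∫ x, w x * f x ∂μ - ∫ x, w x * g x ∂μ| ≤ ∫ x, |f x - g x| ∂μ := by
  have hbdd : ∀ᵐ x ∂μ, ‖w x‖ ≤ 1 := ae_of_all _ hw1
  rw [← integral_sub (hf.bdd_mul hw hbdd) (hg.bdd_mul hw hbdd), ← Real.norm_eq_abs]
  refine norm_integral_le_of_norm_le (hf.sub hg).abs (ae_of_all _ fun x => ?_)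
  rw [← mul_sub, norm_mul, Real.norm_eq_abs, Real.norm_eq_abs]
  exact mul_le_of_le_one_left (abs_nonneg _) (hw1 x)

end MeasureTheory

lemma StieltjesFunction.continuous_of_nullSingletonClass (f : StieltjesFunction ℝ)
    [NullSingletonClass f.measure] : Continuous f := by
  refine continuous_iff_continuousAt.2 fun x =>
    continuousAt_iff_continuous_left_right.2 ⟨?_, f.right_continuous x⟩
  rw [← continuousWithinAt_Iio_iff_Iic, f.mono.continuousWithinAt_Iio_iff_leftLim_eq]
  have h := f.measure_singleton x
  rw [MeasureTheory.measure_singleton, eq_comm, ENNReal.ofReal_eq_zero, sub_nonpos] at h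
  exact le_antisymm (f.mono.leftLim_le le_rfl) h

namespace ProbabilityTheory

lemma cdf_withDensity_ofReal {μ : Measure ℝ} {f : ℝ → ℝ} (hf : 0 ≤ᵐ[μ] f) (hint : Integrable f μ)
    (h1 : ∫ x, f x ∂μ = 1) (y : ℝ) :
    cdf (μ.withDensity fun x => ENNReal.ofReal (f x)) y = ∫ x in Iic y, f x ∂μ := by
  have := isProbabilityMeasure_withDensity_ofReal hf hint h1
  rw [cdf_eq_real, measureReal_def, withDensity_apply _ measurableSet_Iic,
    ← ofReal_integral_eq_lintegral_ofReal hint.integrableOn (ae_restrict_of_ae hf),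
    ENNReal.toReal_ofReal (setIntegral_nonneg_of_ae_restrict (ae_restrict_of_ae hf))]

variable (μ : Measure ℝ) [IsProbabilityMeasure μ]

lemma continuous_cdf [NullSingletonClass μ] : Continuous (cdf μ) := by
  have : NullSingletonClass (cdf μ).measure := by rwa [measure_cdf]
  exact (cdf μ).continuous_of_nullSingletonClass

lemma measure_cdf_preimage_Iic [NullSingletonClass μ] {t : ℝ} (ht0 : 0 ≤ t) (ht1 : t < 1) :
    μ (cdf μ ⁻¹' Iic t) = ENNReal.ofReal t := by
  -- `S` is a closed down-set, hence `Iic (sSup S)`; by the intermediate value theorem the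
  -- level `t` is attained, so `cdf μ (sSup S) = t`.
  set S := cdf μ ⁻¹' Iic t
  obtain ⟨b, hb⟩ : ∃ b, t < cdf μ b :=
    ((tendsto_cdf_atTop μ).eventually (eventually_gt_nhds ht1)).exists
  have hbdd : BddAbove S := ⟨b, fun y hy =>
    le_of_not_gt fun hby => (hb.trans_le (monotone_cdf μ hby.le)).not_ge hy⟩
  rcases S.eq_empty_or_nonempty with hS | ⟨a, ha⟩
  · have : t ≤ 0 := ge_of_tendsto' (tendsto_cdf_atBot μ) fun y =>
      le_of_lt (not_le.1 fun hy => hS.subset hy)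
    rw [hS, measure_empty, le_antisymm this ht0, ENNReal.ofReal_zero]
  have hsup : sSup S ∈ S := (isClosed_Iic.preimage (continuous_cdf μ)).csSup_mem ⟨a, ha⟩ hbdd
  have hS : S = Iic (sSup S) := subset_antisymm (fun y hy => le_csSup hbdd hy)
    (fun y hy => (monotone_cdf μ hy).trans hsup)
  obtain ⟨c, hc⟩ : t ∈ range (cdf μ) := intermediate_value_univ a b (continuous_cdf μ) ⟨ha, hb.le⟩
  have hc_le : c ≤ sSup S := le_csSup hbdd (show cdf μ c ≤ t from hc.le)
  have hsup_eq : cdf μ (sSup S) = t := le_antisymm hsup (hc ▸ monotone_cdf μ hc_le)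
  rw [hS, ← ofReal_cdf, hsup_eq]

theorem map_cdf_eq_restrict_Icc [NullSingletonClass μ] :
    μ.map (cdf μ) = volume.restrict (Icc 0 1) := by
  have hF := (continuous_cdf μ).measurable
  have : IsFiniteMeasure (μ.map (cdf μ)) := μ.isFiniteMeasure_map _
  refine Measure.ext_of_Iic _ _ fun t => ?_
  have hI : Iic t ∩ Icc 0 1 = Icc 0 (min t 1) := by ext; simp; tauto
  rw [Measure.map_apply hF measurableSet_Iic, Measure.restrict_apply measurableSet_Iic, hI,
    Real.volume_Icc, sub_zero]
  rcases lt_or_ge t 0 with ht0 | ht0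
  · have h : cdf μ ⁻¹' Iic t = ∅ :=
      eq_empty_of_forall_notMem fun y hy => (ht0.trans_le (cdf_nonneg μ y)).not_ge hy
    rw [h, measure_empty, ENNReal.ofReal_of_nonpos (by linarith [min_le_left t 1])]
  rcases lt_or_ge t 1 with ht1 | ht1
  · rw [measure_cdf_preimage_Iic μ ht0 ht1, min_eq_left ht1.le]
  · have h : cdf μ ⁻¹' Iic t = univ := eq_univ_of_forall fun y => (cdf_le_one μ y).trans ht1
    rw [h, measure_univ, min_eq_right ht1, ENNReal.ofReal_one]

lemma integral_comp_cdf [NullSingletonClass μ] {g : ℝ → ℝ} (hg : Measurable g) :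
    ∫ y, g (cdf μ y) ∂μ = ∫ t in (0 : ℝ)..1, g t := by
  rw [← integral_map (continuous_cdf μ).aemeasurable hg.aestronglyMeasurable,
    map_cdf_eq_restrict_Icc, intervalIntegral.integral_of_le zero_le_one,
    integral_Icc_eq_integral_Ioc]

end ProbabilityTheory

theorem rank_statistic_near_uniform_of_L1_close_general
    (p ptilde : ℝ → ℝ) (Ftilde : ℝ → ℝ) (ε : ℝ)
    (hp_int : Integrable p)
    (hpt_nonneg : ∀ x, 0 ≤ ptilde x) (hpt_int : Integrable ptilde)
    (hpt_one : ∫ x, ptilde x = 1)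
    (hF : ∀ y, Ftilde y = ∫ x in Set.Iic y, ptilde x)
    (hL1 : (∫ x, |p x - ptilde x|) ≤ ε)
    (K n : ℕ) (hn : n ≤ K) :
    1 / (K + 1) - ε
        ≤ (∫ y, (K.choose n : ℝ) * Ftilde y ^ n * (1 - Ftilde y) ^ (K - n) * p y)
      ∧ (∫ y, (K.choose n : ℝ) * Ftilde y ^ n * (1 - Ftilde y) ^ (K - n) * p y)
        ≤ 1 / (K + 1) + ε := by
  set bern : ℝ → ℝ := fun t => (K.choose n : ℝ) * t ^ n * (1 - t) ^ (K - n)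
  set μ := volume.withDensity fun x => ENNReal.ofReal (ptilde x)
  have hpt_ae : 0 ≤ᵐ[volume] ptilde := ae_of_all _ hpt_nonneg
  have := isProbabilityMeasure_withDensity_ofReal hpt_ae hpt_int hpt_one
  have hcdf : ⇑(cdf μ) = Ftilde :=
    funext fun y => (cdf_withDensity_ofReal hpt_ae hpt_int hpt_one y).trans (hF y).symm
  have hbern_le (y : ℝ) : |bern (Ftilde y)| ≤ 1 := by
    rw [← hcdf]
    obtain ⟨h0, h1⟩ := choose_mul_pow_mul_one_sub_pow_mem_Icc K n ⟨cdf_nonneg μ y, cdf_le_one μ y⟩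
    exact (abs_of_nonneg h0).trans_le h1
  have hQtilde : ∫ y, bern (Ftilde y) * ptilde y = 1 / (K + 1) := by
    rw [← integral_withDensity_ofReal hpt_ae hpt_int.aemeasurable, ← hcdf,
      integral_comp_cdf μ (by fun_prop), integral_choose_mul_pow_mul_one_sub_pow hn]
  have hclose := abs_integral_mul_sub_integral_mul_le
    (hcdf ▸ ((by fun_prop : Continuous bern).comp (continuous_cdf μ)).aestronglyMeasurable)
    hbern_le hp_int hpt_int
  rw [hQtilde] at hclose
  constructor <;> linarith [abs_le.1 hclose]

/-- **Theorem 2 (continuity of the rank statistic w.r.t. the L¹ norm).**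
If `p` and `p̃` are probability densities on `ℝ`, `F̃` is the cdf of `p̃`, and
`Q_K(n) = ∫ C(K,n) F̃(y)^n (1 - F̃(y))^{K-n} p(y) dy`, then `‖p - p̃‖_{L¹} ≤ ε`
implies `1/(K+1) - ε ≤ Q_K(n) ≤ 1/(K+1) + ε` for every `n ∈ {0,…,K}`. -/
theorem rank_statistic_near_uniform_of_L1_close
    (p ptilde : ℝ → ℝ) (Ftilde : ℝ → ℝ) (ε : ℝ)
    (hp_nonneg : ∀ x, 0 ≤ p x) (hp_int : Integrable p)
    (hp_one : ∫ x, p x = 1)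
    (hpt_nonneg : ∀ x, 0 ≤ ptilde x) (hpt_int : Integrable ptilde)
    (hpt_one : ∫ x, ptilde x = 1)
    (hF : ∀ y, Ftilde y = ∫ x in Set.Iic y, ptilde x)
    (hL1 : (∫ x, |p x - ptilde x|) ≤ ε)
    (K n : ℕ) (hn : n ≤ K) :
    1 / (K + 1) - ε
        ≤ (∫ y, (K.choose n : ℝ) * Ftilde y ^ n * (1 - Ftilde y) ^ (K - n) * p y)
      ∧ (∫ y, (K.choose n : ℝ) * Ftilde y ^ n * (1 - Ftilde y) ^ (K - n) * p y)
        ≤ 1 / (K + 1) + ε :=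
  rank_statistic_near_uniform_of_L1_close_general p ptilde Ftilde ε hp_int hpt_nonneg hpt_int
    hpt_one hF hL1 K n hn
end

section
/- Let p and p̃ be probability density functions of univariate real random variables, let F̃ denote the cumulative distribution function of p̃, and for K ∈ ℕ and n ∈ {0,…,K} let Q_K(n) = ∫_ℝ C(K,n) · F̃(y)^n · (1 − F̃(y))^{K−n} · p(y) dy. If for every K ∈ ℕ the rank statistic A_K is uniformly distributed on {0,…,K}, i.e., Q_K(n) = 1/(K+1) for every K ∈ ℕ and every n ∈ {0,…,K}, then p = p̃ almost everywhere. -/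
open MeasureTheory

lemma bern_sum (K : ℕ) (s : ℝ) :
    ∑ n ∈ Finset.range (K+1), (K.choose n : ℝ) * s ^ n * (1-s) ^ (K-n) = 1 := by
  have h := congrArg (Polynomial.eval s) (bernsteinPolynomial.sum ℝ K)
  simpa [bernsteinPolynomial, Polynomial.eval_finset_sum] using h

lemma bern_var (K : ℕ) (s : ℝ) :
    ∑ n ∈ Finset.range (K+1), ((K:ℝ)*s - n)^2 * ((K.choose n : ℝ) * s ^ n * (1-s) ^ (K-n))
      = (K:ℝ) * s * (1-s) := by
  have h := congrArg (Polynomial.eval s) (bernsteinPolynomial.variance ℝ K)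
  simpa [bernsteinPolynomial, Polynomial.eval_finset_sum] using h

lemma bern_cheb {K : ℕ} (hK : 0 < K) {s δ : ℝ} (hs0 : 0 ≤ s) (hs1 : s ≤ 1) (hδ : 0 < δ)
    {T : Finset ℕ} (hT : T ⊆ Finset.range (K+1))
    (h : ∀ n ∈ T, (K:ℝ) * δ ≤ |(K:ℝ)*s - n|) :
    ∑ n ∈ T, (K.choose n : ℝ) * s ^ n * (1-s) ^ (K-n) ≤ 1 / (4 * K * δ^2) := by
  have hKpos : (0:ℝ) < K := by exact_mod_cast hK
  have hs1' : 0 ≤ 1 - s := by linarith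
  have step1 : ∀ n ∈ T, (K.choose n : ℝ) * s^n * (1-s)^(K-n)
      ≤ (((K:ℝ)*s - n)^2 / ((K:ℝ)*δ)^2) * ((K.choose n : ℝ) * s^n * (1-s)^(K-n)) := by
    intro n hn
    have hb : 0 ≤ (K.choose n : ℝ) * s^n * (1-s)^(K-n) := by positivity
    have h1 : ((K:ℝ)*δ)^2 ≤ ((K:ℝ)*s - n)^2 := by
      have h2 := h n hn
      calc ((K:ℝ)*δ)^2 ≤ |(K:ℝ)*s - n|^2 := by
            have h0 : 0 ≤ (K:ℝ)*δ := by positivity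
            nlinarith [abs_nonneg ((K:ℝ)*s - n)]
        _ = ((K:ℝ)*s - n)^2 := sq_abs _
    have h4 : (1:ℝ) ≤ ((K:ℝ)*s - n)^2 / ((K:ℝ)*δ)^2 :=
      (one_le_div (by positivity)).2 h1
    nlinarith [mul_le_mul_of_nonneg_right h4 hb]
  calc ∑ n ∈ T, (K.choose n : ℝ) * s^n * (1-s)^(K-n)
      ≤ ∑ n ∈ T, (((K:ℝ)*s - n)^2 / ((K:ℝ)*δ)^2) * ((K.choose n : ℝ) * s^n * (1-s)^(K-n)) :=
        Finset.sum_le_sum step1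
    _ ≤ ∑ n ∈ Finset.range (K+1),
          (((K:ℝ)*s - n)^2 / ((K:ℝ)*δ)^2) * ((K.choose n : ℝ) * s^n * (1-s)^(K-n)) := by
        refine Finset.sum_le_sum_of_subset_of_nonneg hT fun n _ _ => by positivity
    _ = (1 / ((K:ℝ)*δ)^2) * ∑ n ∈ Finset.range (K+1),
          ((K:ℝ)*s - n)^2 * ((K.choose n : ℝ) * s^n * (1-s)^(K-n)) := by
        rw [Finset.mul_sum]; exact Finset.sum_congr rfl fun n _ => by ring
    _ = (1 / ((K:ℝ)*δ)^2) * ((K:ℝ) * s * (1-s)) := by rw [bern_var]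
    _ ≤ 1 / (4 * K * δ^2) := by
        rw [div_mul_eq_mul_div, one_mul, div_le_div_iff₀ (by positivity) (by positivity)]
        nlinarith [sq_nonneg (s - 1/2), sq_nonneg ((K:ℝ)*δ)]


set_option maxHeartbeats 1000000 in
/-- **Theorem 4 (characterisation).** If `p` and `p̃` are probability densities on `ℝ`,
`F̃` is the cdf of `p̃`, and the rank statistic `A_K` with pmf
`Q_K(n) = ∫ C(K,n) F̃(y)^n (1 - F̃(y))^{K-n} p(y) dy` is uniformly distributed on
`{0,…,K}` for every `K ∈ ℕ`, then `p = p̃` almost everywhere. -/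
theorem ae_eq_of_rank_statistic_uniform
    (p ptilde : ℝ → ℝ) (Ftilde : ℝ → ℝ)
    (hp_nonneg : ∀ x, 0 ≤ p x) (hp_int : Integrable p)
    (hp_one : ∫ x, p x = 1)
    (hpt_nonneg : ∀ x, 0 ≤ ptilde x) (hpt_int : Integrable ptilde)
    (hpt_one : ∫ x, ptilde x = 1)
    (hF : ∀ y, Ftilde y = ∫ x in Set.Iic y, ptilde x)
    (huniform : ∀ K n : ℕ, n ≤ K →
      (∫ y, (K.choose n : ℝ) * Ftilde y ^ n * (1 - Ftilde y) ^ (K - n) * p y)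
        = 1 / (K + 1)) :
    p =ᵐ[volume] ptilde := by
  -- basic properties of Ftilde
  have hF0 : ∀ y, 0 ≤ Ftilde y := fun y => by
    rw [hF]; exact setIntegral_nonneg measurableSet_Iic fun x _ => hpt_nonneg x
  have hF1 : ∀ y, Ftilde y ≤ 1 := fun y => by
    rw [hF, ← hpt_one]
    exact setIntegral_le_integral hpt_int (ae_of_all _ hpt_nonneg)
  have hFmono : Monotone Ftilde := by
    intro a b hab
    rw [hF, hF]
    exact setIntegral_mono_set hpt_int.integrableOn (ae_of_all _ hpt_nonneg)
      (HasSubset.Subset.eventuallyLE (Set.Iic_subset_Iic.2 hab))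
  have hFm : Measurable Ftilde := hFmono.measurable
  -- integrability of each Bernstein term times p
  have hInt : ∀ K n : ℕ, Integrable
      (fun y => (K.choose n : ℝ) * Ftilde y ^ n * (1 - Ftilde y) ^ (K - n) * p y) := by
    intro K n
    have hm : Measurable fun y => (K.choose n : ℝ) * Ftilde y ^ n * (1 - Ftilde y) ^ (K - n) :=
      ((measurable_const.mul (hFm.pow_const n)).mul
        ((measurable_const.sub hFm).pow_const (K - n)))
    refine Integrable.mono' (hp_int.const_mul (K.choose n : ℝ))
      (hm.aestronglyMeasurable.mul hp_int.1) (ae_of_all _ fun y => ?_)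
    have h0 : 0 ≤ Ftilde y := hF0 y
    have h1 : Ftilde y ≤ 1 := hF1 y
    have hb0 : (0:ℝ) ≤ (K.choose n : ℝ) * Ftilde y ^ n * (1 - Ftilde y) ^ (K - n) := by
      have : (0:ℝ) ≤ 1 - Ftilde y := by linarith
      positivity
    rw [Real.norm_eq_abs, abs_mul, abs_of_nonneg hb0, abs_of_nonneg (hp_nonneg y)]
    have hpow1 : Ftilde y ^ n ≤ 1 := pow_le_one₀ h0 h1
    have hpow2 : (1 - Ftilde y) ^ (K - n) ≤ 1 := pow_le_one₀ (by linarith) (by linarith)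
    have : (K.choose n : ℝ) * Ftilde y ^ n * (1 - Ftilde y) ^ (K - n) ≤ (K.choose n : ℝ) := by
      have hc : (0:ℝ) ≤ (K.choose n : ℝ) := Nat.cast_nonneg _
      calc (K.choose n : ℝ) * Ftilde y ^ n * (1 - Ftilde y) ^ (K - n)
          ≤ (K.choose n : ℝ) * Ftilde y ^ n :=
            mul_le_of_le_one_right (mul_nonneg hc (pow_nonneg h0 n)) hpow2
        _ ≤ (K.choose n : ℝ) := mul_le_of_le_one_right hc hpow1
    exact mul_le_mul_of_nonneg_right this (hp_nonneg y)
  -- integrability of partial Bernstein sums times p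
  have hBint : ∀ K m : ℕ, Integrable (fun y =>
      (∑ n ∈ Finset.range (m+1),
        (K.choose n : ℝ) * Ftilde y ^ n * (1 - Ftilde y) ^ (K - n)) * p y) := by
    intro K m
    have : (fun y => (∑ n ∈ Finset.range (m+1),
        (K.choose n : ℝ) * Ftilde y ^ n * (1 - Ftilde y) ^ (K - n)) * p y)
        = fun y => ∑ n ∈ Finset.range (m+1),
          (K.choose n : ℝ) * Ftilde y ^ n * (1 - Ftilde y) ^ (K - n) * p y := by
      funext y; rw [Finset.sum_mul]
    rw [this]
    exact integrable_finset_sum _ fun n _ => hInt K n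
  -- value of the integral of partial Bernstein sums
  have hsum : ∀ K m : ℕ, m ≤ K → (∫ y, (∑ n ∈ Finset.range (m+1),
      (K.choose n : ℝ) * Ftilde y ^ n * (1 - Ftilde y) ^ (K - n)) * p y)
      = ((m:ℝ)+1) / ((K:ℝ)+1) := by
    intro K m hm
    have heq : (fun y => (∑ n ∈ Finset.range (m+1),
        (K.choose n : ℝ) * Ftilde y ^ n * (1 - Ftilde y) ^ (K - n)) * p y)
        = fun y => ∑ n ∈ Finset.range (m+1),
          (K.choose n : ℝ) * Ftilde y ^ n * (1 - Ftilde y) ^ (K - n) * p y := by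
      funext y; rw [Finset.sum_mul]
    rw [heq, integral_finset_sum _ fun n _ => hInt K n]
    have : ∀ n ∈ Finset.range (m+1),
        (∫ y, (K.choose n : ℝ) * Ftilde y ^ n * (1 - Ftilde y) ^ (K - n) * p y)
        = 1 / ((K:ℝ)+1) := by
      intro n hn
      have : n ≤ K := le_trans (Nat.lt_succ_iff.1 (Finset.mem_range.1 hn)) hm
      simpa using huniform K n this
    rw [Finset.sum_congr rfl this, Finset.sum_const, Finset.card_range]
    push_cast
    ring
  -- key: the cdf of p agrees with Ftilde
  have hkey : ∀ x : ℝ, (∫ y in Set.Iic x, p y) = Ftilde x := by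
    intro x
    set t := Ftilde x with ht
    have ht0 : 0 ≤ t := hF0 x
    have ht1 : t ≤ 1 := hF1 x
    have hI0 : 0 ≤ ∫ y in Set.Iic x, p y :=
      setIntegral_nonneg measurableSet_Iic fun y _ => hp_nonneg y
    have hI1 : (∫ y in Set.Iic x, p y) ≤ 1 := by
      rw [← hp_one]; exact setIntegral_le_integral hp_int (ae_of_all _ hp_nonneg)
    -- a good K for each ε
    have hKex : ∀ ε : ℝ, 0 < ε → ∃ K : ℕ, 0 < K ∧ 4/ε^3 ≤ (K:ℝ) ∧ 8/ε ≤ (K:ℝ) := by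
      intro ε hε
      obtain ⟨K, hK⟩ := exists_nat_ge (max (4/ε^3) (8/ε) + 1)
      have h1 : 4/ε^3 ≤ (K:ℝ) := by
        have := le_max_left (4/ε^3) (8/ε); linarith
      have h2 : 8/ε ≤ (K:ℝ) := by
        have := le_max_right (4/ε^3) (8/ε); linarith
      have h3 : 0 < K := by
        have h4 : (0:ℝ) < 8/ε := by positivity
        have : (0:ℝ) < (K:ℝ) := by linarith
        exact_mod_cast this
      exact ⟨K, h3, h1, h2⟩
    refine le_antisymm ?_ ?_
    · -- upper bound
      refine le_of_forall_pos_le_add fun ε hε => ?_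
      by_cases hc : 1 ≤ t + ε/2
      · linarith
      push_neg at hc
      obtain ⟨K, hK1, hK2, hK3⟩ := hKex ε hε
      have hKpos : (0:ℝ) < K := by exact_mod_cast hK1
      set m := ⌈(K:ℝ) * (t + ε/2)⌉₊ with hm
      have hmK : m ≤ K := by
        refine Nat.ceil_le.2 ?_
        nlinarith
      have hmge : (K:ℝ)*(t+ε/2) ≤ (m:ℝ) := Nat.le_ceil _
      have hmlt : (m:ℝ) ≤ (K:ℝ)*(t+ε/2) + 1 := by
        have := Nat.ceil_lt_add_one (show (0:ℝ) ≤ (K:ℝ)*(t+ε/2) by positivity)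
        linarith
      -- pointwise bound
      have hpt : ∀ y, Set.indicator (Set.Iic x) p y ≤
          (∑ n ∈ Finset.range (m+1),
            (K.choose n : ℝ) * Ftilde y ^ n * (1 - Ftilde y) ^ (K - n)) * p y
          + (1/((K:ℝ)*ε^2)) * p y := by
        intro y
        have hsum_nonneg : 0 ≤ ∑ n ∈ Finset.range (m+1),
            (K.choose n : ℝ) * Ftilde y ^ n * (1 - Ftilde y) ^ (K - n) := by
          refine Finset.sum_nonneg fun n _ => ?_
          have h0 := hF0 y; have h1 := hF1 y
          have : (0:ℝ) ≤ 1 - Ftilde y := by linarith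
          positivity
        by_cases hy : y ∈ Set.Iic x
        · rw [Set.indicator_of_mem hy]
          have hsy : Ftilde y ≤ t := hFmono hy
          have htail : ∑ n ∈ Finset.Ico (m+1) (K+1),
              (K.choose n : ℝ) * Ftilde y ^ n * (1 - Ftilde y) ^ (K - n)
              ≤ 1/(4*(K:ℝ)*(ε/2)^2) := by
            refine bern_cheb hK1 (hF0 y) (hF1 y) (half_pos hε) ?_ ?_
            · intro n hn
              simp only [Finset.mem_Ico] at hn
              exact Finset.mem_range.2 (by omega)
            · intro n hn
              simp only [Finset.mem_Ico] at hn
              have hn1 : (m:ℝ) + 1 ≤ (n:ℝ) := by exact_mod_cast hn.1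
              have : (K:ℝ) * Ftilde y ≤ (K:ℝ) * t :=
                mul_le_mul_of_nonneg_left hsy (le_of_lt hKpos)
              have habs : (K:ℝ) * (ε/2) ≤ (n:ℝ) - (K:ℝ) * Ftilde y := by nlinarith
              calc (K:ℝ) * (ε/2) ≤ (n:ℝ) - (K:ℝ) * Ftilde y := habs
                _ ≤ |(K:ℝ) * Ftilde y - n| := by
                    rw [abs_sub_comm]; exact le_abs_self _
          have hsplit : (∑ n ∈ Finset.range (m+1),
              (K.choose n : ℝ) * Ftilde y ^ n * (1 - Ftilde y) ^ (K - n))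
              + ∑ n ∈ Finset.Ico (m+1) (K+1),
              (K.choose n : ℝ) * Ftilde y ^ n * (1 - Ftilde y) ^ (K - n) = 1 := by
            rw [Finset.range_eq_Ico,
              Finset.sum_Ico_consecutive _ (Nat.zero_le _) (by omega),
              ← Finset.range_eq_Ico, bern_sum]
          have h4 : 1/(4*(K:ℝ)*(ε/2)^2) = 1/((K:ℝ)*ε^2) := by
            field_simp; ring
          rw [h4] at htail
          have hBge : 1 - 1/((K:ℝ)*ε^2) ≤ ∑ n ∈ Finset.range (m+1),
              (K.choose n : ℝ) * Ftilde y ^ n * (1 - Ftilde y) ^ (K - n) := by linarith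
          nlinarith [mul_le_mul_of_nonneg_left hBge (hp_nonneg y)]
        · rw [Set.indicator_of_notMem hy]
          have h5 : (0:ℝ) ≤ 1/((K:ℝ)*ε^2) := by positivity
          nlinarith [mul_nonneg hsum_nonneg (hp_nonneg y), mul_nonneg h5 (hp_nonneg y)]
      -- integrate the pointwise bound
      have hind : Integrable (Set.indicator (Set.Iic x) p) :=
        hp_int.indicator measurableSet_Iic
      have hrhs : Integrable (fun y =>
          (∑ n ∈ Finset.range (m+1),
            (K.choose n : ℝ) * Ftilde y ^ n * (1 - Ftilde y) ^ (K - n)) * p y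
          + (1/((K:ℝ)*ε^2)) * p y) :=
        (hBint K m).add (hp_int.const_mul _)
      have hmono := integral_mono hind hrhs hpt
      rw [integral_indicator measurableSet_Iic] at hmono
      rw [integral_add (hBint K m) (hp_int.const_mul _), hsum K m hmK,
        integral_const_mul, hp_one, mul_one] at hmono
      have h1 : ((m:ℝ)+1)/((K:ℝ)+1) ≤ t + ε/2 + 2/(K:ℝ) := by
        rw [div_le_iff₀ (by positivity)]
        have h2 : (0:ℝ) < 2/(K:ℝ) := by positivity
        have h2' : 2/(K:ℝ) * (K:ℝ) = 2 := by field_simp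
        nlinarith
      have h2 : 2/(K:ℝ) ≤ ε/4 := by
        rw [div_le_iff₀ hKpos]
        have : 8 ≤ (K:ℝ)*ε := by
          rw [div_le_iff₀ hε] at hK3; linarith
        nlinarith
      have h3 : 1/((K:ℝ)*ε^2) ≤ ε/4 := by
        rw [div_le_iff₀ (by positivity)]
        have : 4 ≤ (K:ℝ)*ε^3 := by
          rw [div_le_iff₀ (by positivity)] at hK2; linarith
        nlinarith
      linarith
    · -- lower bound
      refine le_of_forall_pos_le_add fun ε hε => ?_
      by_cases hc : t ≤ ε
      · linarith
      push_neg at hc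
      obtain ⟨K, hK1, hK2, hK3⟩ := hKex ε hε
      have hKpos : (0:ℝ) < K := by exact_mod_cast hK1
      have htpos : 0 < t - ε/2 := by linarith
      set m := ⌊(K:ℝ) * (t - ε/2)⌋₊ with hm
      have hmle : (m:ℝ) ≤ (K:ℝ)*(t-ε/2) := Nat.floor_le (by positivity)
      have hmge : (K:ℝ)*(t-ε/2) ≤ (m:ℝ) + 1 := le_of_lt (Nat.lt_floor_add_one _)
      have hmK : m ≤ K := by
        have : (m:ℝ) ≤ (K:ℝ) := by nlinarith
        exact_mod_cast this
      -- pointwise bound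
      have hpt : ∀ y,
          (∑ n ∈ Finset.range (m+1),
            (K.choose n : ℝ) * Ftilde y ^ n * (1 - Ftilde y) ^ (K - n)) * p y
          - (1/((K:ℝ)*ε^2)) * p y ≤ Set.indicator (Set.Iic x) p y := by
        intro y
        have hsum_nonneg : 0 ≤ ∑ n ∈ Finset.range (m+1),
            (K.choose n : ℝ) * Ftilde y ^ n * (1 - Ftilde y) ^ (K - n) := by
          refine Finset.sum_nonneg fun n _ => ?_
          have h0 := hF0 y; have h1 := hF1 y
          have : (0:ℝ) ≤ 1 - Ftilde y := by linarith
          positivity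
        by_cases hy : y ∈ Set.Iic x
        · rw [Set.indicator_of_mem hy]
          have hBle : (∑ n ∈ Finset.range (m+1),
              (K.choose n : ℝ) * Ftilde y ^ n * (1 - Ftilde y) ^ (K - n)) ≤ 1 := by
            refine le_trans (Finset.sum_le_sum_of_subset_of_nonneg
              (Finset.range_subset_range.2 (Nat.succ_le_succ hmK)) fun n _ _ => ?_)
              (le_of_eq (bern_sum K (Ftilde y)))
            have h0 := hF0 y; have h1 := hF1 y
            have : (0:ℝ) ≤ 1 - Ftilde y := by linarith
            positivity
          have h5 : (0:ℝ) ≤ 1/((K:ℝ)*ε^2) := by positivity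
          nlinarith [mul_le_mul_of_nonneg_left hBle (hp_nonneg y),
            mul_nonneg h5 (hp_nonneg y)]
        · rw [Set.indicator_of_notMem hy]
          have hxy : x ≤ y := le_of_lt (lt_of_not_ge hy)
          have hsy : t ≤ Ftilde y := hFmono hxy
          have htail : ∑ n ∈ Finset.range (m+1),
              (K.choose n : ℝ) * Ftilde y ^ n * (1 - Ftilde y) ^ (K - n)
              ≤ 1/(4*(K:ℝ)*(ε/2)^2) := by
            refine bern_cheb hK1 (hF0 y) (hF1 y) (half_pos hε)
              (Finset.range_subset_range.2 (Nat.succ_le_succ hmK)) ?_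
            intro n hn
            have hn1 : (n:ℝ) ≤ (m:ℝ) := by
              exact_mod_cast Nat.lt_succ_iff.1 (Finset.mem_range.1 hn)
            have : (K:ℝ) * t ≤ (K:ℝ) * Ftilde y :=
              mul_le_mul_of_nonneg_left hsy (le_of_lt hKpos)
            have habs : (K:ℝ) * (ε/2) ≤ (K:ℝ) * Ftilde y - (n:ℝ) := by nlinarith
            calc (K:ℝ) * (ε/2) ≤ (K:ℝ) * Ftilde y - (n:ℝ) := habs
              _ ≤ |(K:ℝ) * Ftilde y - n| := le_abs_self _
          have h4 : 1/(4*(K:ℝ)*(ε/2)^2) = 1/((K:ℝ)*ε^2) := by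
            field_simp; ring
          rw [h4] at htail
          nlinarith [mul_le_mul_of_nonneg_right htail (hp_nonneg y)]
      -- integrate
      have hind : Integrable (Set.indicator (Set.Iic x) p) :=
        hp_int.indicator measurableSet_Iic
      have hlhs : Integrable (fun y =>
          (∑ n ∈ Finset.range (m+1),
            (K.choose n : ℝ) * Ftilde y ^ n * (1 - Ftilde y) ^ (K - n)) * p y
          - (1/((K:ℝ)*ε^2)) * p y) :=
        (hBint K m).sub (hp_int.const_mul _)
      have hmono := integral_mono hlhs hind hpt
      rw [integral_indicator measurableSet_Iic] at hmono
      rw [integral_sub (hBint K m) (hp_int.const_mul _), hsum K m hmK,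
        integral_const_mul, hp_one, mul_one] at hmono
      have h1 : t - ε/2 - 2/(K:ℝ) ≤ ((m:ℝ)+1)/((K:ℝ)+1) := by
        rw [le_div_iff₀ (by positivity)]
        have h2 : (0:ℝ) < 2/(K:ℝ) := by positivity
        have h2' : 2/(K:ℝ) * (K:ℝ) = 2 := by field_simp
        nlinarith
      have h2 : 2/(K:ℝ) ≤ ε/4 := by
        rw [div_le_iff₀ hKpos]
        have : 8 ≤ (K:ℝ)*ε := by
          rw [div_le_iff₀ hε] at hK3; linarith
        nlinarith
      have h3 : 1/((K:ℝ)*ε^2) ≤ ε/4 := by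
        rw [div_le_iff₀ (by positivity)]
        have : 4 ≤ (K:ℝ)*ε^3 := by
          rw [div_le_iff₀ (by positivity)] at hK2; linarith
        nlinarith
      linarith
  -- both densities give finite measures with the same cdf, hence are a.e. equal
  have hpm : AEMeasurable (fun y => ENNReal.ofReal (p y)) volume :=
    ENNReal.measurable_ofReal.comp_aemeasurable hp_int.1.aemeasurable
  have hptm : AEMeasurable (fun y => ENNReal.ofReal (ptilde y)) volume :=
    ENNReal.measurable_ofReal.comp_aemeasurable hpt_int.1.aemeasurable
  set μ1 := volume.withDensity fun y => ENNReal.ofReal (p y) with hμ1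
  set μ2 := volume.withDensity fun y => ENNReal.ofReal (ptilde y) with hμ2
  have hμ1fin : IsFiniteMeasure μ1 := by
    constructor
    rw [hμ1, withDensity_apply _ MeasurableSet.univ, setLIntegral_univ,
      ← ofReal_integral_eq_lintegral_ofReal hp_int (ae_of_all _ hp_nonneg)]
    exact ENNReal.ofReal_lt_top
  have hIic : ∀ a : ℝ, μ1 (Set.Iic a) = μ2 (Set.Iic a) := by
    intro a
    rw [hμ1, hμ2, withDensity_apply _ measurableSet_Iic,
      withDensity_apply _ measurableSet_Iic,
      ← ofReal_integral_eq_lintegral_ofReal hp_int.integrableOn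
        (ae_of_all _ hp_nonneg),
      ← ofReal_integral_eq_lintegral_ofReal hpt_int.integrableOn
        (ae_of_all _ hpt_nonneg),
      hkey a, ← hF a]
  have h12 : μ1 = μ2 := by
    haveI := hμ1fin
    exact MeasureTheory.Measure.ext_of_Iic μ1 μ2 hIic
  have hae : (fun y => ENNReal.ofReal (p y)) =ᵐ[volume]
      (fun y => ENNReal.ofReal (ptilde y)) :=
    (withDensity_eq_iff_of_sigmaFinite hpm hptm).1 h12
  filter_upwards [hae] with y hy
  exact (ENNReal.ofReal_eq_ofReal_iff (hp_nonneg y) (hpt_nonneg y)).1 hy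
end

section
/- Let g : ℝ → ℝ be differentiable with |g'(z)| ≥ m > 0 for all z ∈ ℝ, let y₀ ∈ ℝ and δ ≥ 0, and let B = {u ∈ ℝ : |g(u) − y₀| ≤ δ}. Then the Lebesgue measure of B satisfies ℒ(B) ≤ 2δ/m. -/
open MeasureTheory

lemma near_level_dist_le
    (g : ℝ → ℝ) (m : ℝ) (hm : 0 < m)
    (hg : Differentiable ℝ g) (hderiv : ∀ z, m ≤ |deriv g z|)
    (y₀ δ : ℝ) (u v : ℝ) (huv : u < v)
    (hu : |g u - y₀| ≤ δ) (hv : |g v - y₀| ≤ δ) :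
    v - u ≤ 2 * δ / m := by
  obtain ⟨c, _, hc⟩ := exists_deriv_eq_slope g huv (hg.continuous.continuousOn)
    (hg.differentiableOn)
  have h1 : m * (v - u) ≤ |g v - g u| := by
    have := hderiv c
    rw [hc, abs_div, abs_of_pos (by linarith : (0:ℝ) < v - u)] at this
    calc m * (v - u) ≤ (|g v - g u| / (v - u)) * (v - u) := by
          apply mul_le_mul_of_nonneg_right this (by linarith)
      _ = |g v - g u| := by field_simp [sub_ne_zero.mpr huv.ne']
  have h2 : |g v - g u| ≤ 2 * δ := by
    calc |g v - g u| = |(g v - y₀) - (g u - y₀)| := by ring_nf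
      _ ≤ |g v - y₀| + |g u - y₀| := abs_sub _ _
      _ ≤ 2 * δ := by linarith
  rw [le_div_iff₀ hm, mul_comm]
  linarith

/-- **Measure bound on near-level sets.** If `g : ℝ → ℝ` is differentiable with
`|g'(z)| ≥ m > 0` for all `z`, then for any `y₀ ∈ ℝ` and `δ ≥ 0` the set
`B = {u : |g(u) - y₀| ≤ δ}` has Lebesgue measure `ℒ(B) ≤ 2δ/m`. -/
theorem measure_near_level_set_le
    (g : ℝ → ℝ) (m : ℝ) (hm : 0 < m)
    (hg : Differentiable ℝ g) (hderiv : ∀ z, m ≤ |deriv g z|)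
    (y₀ δ : ℝ) (hδ : 0 ≤ δ) :
    volume {u : ℝ | |g u - y₀| ≤ δ} ≤ ENNReal.ofReal (2 * δ / m) := by
  refine le_trans (Real.volume_le_diam _) (EMetric.diam_le ?_)
  intro u hu v hv
  simp only [Set.mem_setOf_eq] at hu hv
  rw [edist_dist, Real.dist_eq]
  refine ENNReal.ofReal_le_ofReal ?_
  rcases lt_trichotomy u v with h | h | h
  · rw [abs_of_nonpos (by linarith)]
    have := near_level_dist_le g m hm hg hderiv y₀ δ u v h hu hv
    linarith
  · simp [h]; positivity
  · rw [abs_of_nonneg (by linarith)]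
    have := near_level_dist_le g m hm hg hderiv y₀ δ v u h hv hu
    linarith
end

section
/- Let p_z be a bounded probability density on ℝ, and let g_θ : ℝ → ℝ be a family of functions, differentiable in z, satisfying the Lipschitz condition |g_θ(z) − g_{θ'}(z)| ≤ L_max ‖θ − θ'‖ for almost every z (with L_max < ∞) and inf_{(z,θ)} |g_θ'(z)| ≥ m > 0. Let F̃_θ(y₀) = ∫_ℝ 𝟙{g_θ(u) ≤ y₀} p_z(u) du be the cdf of g_θ(z) where z ∼ p_z. Then for every y₀ ∈ ℝ and all θ, θ' ∈ ℝ^d, |F̃_θ(y₀) − F̃_{θ'}(y₀)| ≤ L₁ ‖θ − θ'‖, where L₁ = ‖p_z‖_{L^∞(ℝ)} · 2 L_max / m. -/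
open MeasureTheory Set
open scoped symmDiff ENNReal

/-! Up to a null set, the sublevel sets `{g θ ≤ y₀}` and `{g θ' ≤ y₀}` differ only where `g θ`
lies within `δ = Lmax ‖θ - θ'‖` of `y₀`. By the mean value theorem, `m ≤ |deriv (g θ) z|` makes
`g θ` expand distances by the factor `m`, so the preimage of `[y₀ - δ, y₀ + δ]` under `g θ` has
diameter, hence Lebesgue measure, at most `2δ / m`, and a density bounded by `Cz` puts mass at
most `Cz · 2δ / m` on it. -/

section SetIntegral

variable {α E : Type*} [MeasurableSpace α] [NormedAddCommGroup E] [NormedSpace ℝ E]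
  {μ : Measure α} {f : α → E} {s t : Set α} {C : ℝ}

theorem norm_setIntegral_sub_setIntegral_le (hs : MeasurableSet s) (ht : MeasurableSet t)
    (hfs : IntegrableOn f s μ) (hft : IntegrableOn f t μ) (hC : ∀ᵐ x ∂μ, ‖f x‖ ≤ C)
    (hst : μ (s ∆ t) ≠ ∞) :
    ‖∫ x in s, f x ∂μ - ∫ x in t, f x ∂μ‖ ≤ C * μ.real (s ∆ t) := by
  have hst_fin : μ (s \ t) < ∞ :=
    (measure_mono (le_sup_left : s \ t ≤ s ∆ t)).trans_lt hst.lt_top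
  have hts_fin : μ (t \ s) < ∞ :=
    (measure_mono (le_sup_right : t \ s ≤ s ∆ t)).trans_lt hst.lt_top
  have hsplit : ∫ x in s, f x ∂μ - ∫ x in t, f x ∂μ
      = ∫ x in s \ t, f x ∂μ - ∫ x in t \ s, f x ∂μ := by
    rw [← integral_inter_add_sdiff ht hfs, ← integral_inter_add_sdiff hs hft, inter_comm t s]
    abel
  have hreal : μ.real (s ∆ t) = μ.real (s \ t) + μ.real (t \ s) := by
    simp only [measureReal_def]
    rw [measure_symmDiff_eq hs.nullMeasurableSet ht.nullMeasurableSet,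
      ENNReal.toReal_add hst_fin.ne hts_fin.ne]
  calc ‖∫ x in s, f x ∂μ - ∫ x in t, f x ∂μ‖
      ≤ ‖∫ x in s \ t, f x ∂μ‖ + ‖∫ x in t \ s, f x ∂μ‖ := hsplit ▸ norm_sub_le _ _
    _ ≤ C * μ.real (s \ t) + C * μ.real (t \ s) :=
      add_le_add (norm_setIntegral_le_of_norm_le_const_ae' hst_fin (hC.mono fun _ h _ => h))
        (norm_setIntegral_le_of_norm_le_const_ae' hts_fin (hC.mono fun _ h _ => h))
    _ = C * μ.real (s ∆ t) := by rw [hreal, mul_add]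

end SetIntegral

theorem symmDiff_setOf_le_ae_le_preimage_Icc {α : Type*} [MeasurableSpace α] {μ : Measure α}
    {f h : α → ℝ} {δ : ℝ} (hfh : ∀ᵐ x ∂μ, |f x - h x| ≤ δ) (y : ℝ) :
    ({x | f x ≤ y} ∆ {x | h x ≤ y} : Set α) ≤ᵐ[μ] f ⁻¹' Icc (y - δ) (y + δ) := by
  filter_upwards [hfh] with x hx hmem
  obtain ⟨hlo, hhi⟩ := abs_le.1 hx
  rcases hmem with ⟨hf, hh⟩ | ⟨hh, hf⟩ <;> simp only [mem_ofPred_eq, not_le] at hf hh <;>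
    exact ⟨by linarith, by linarith⟩

section DerivLowerBound

variable {f : ℝ → ℝ} {m : ℝ}

theorem mul_abs_sub_le_abs_sub_of_le_abs_deriv (hf : Differentiable ℝ f)
    (hm : ∀ x, m ≤ |deriv f x|) (u v : ℝ) : m * |v - u| ≤ |f v - f u| := by
  wlog huv : u < v generalizing u v
  · rcases (not_lt.1 huv).eq_or_lt with rfl | hvu
    · simp
    · simpa only [abs_sub_comm] using this v u hvu
  obtain ⟨c, -, hc⟩ := exists_deriv_eq_slope f huv hf.continuous.continuousOn
    hf.differentiableOn
  have hvu : v - u ≠ 0 := sub_ne_zero.2 huv.ne'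
  calc m * |v - u| ≤ |deriv f c| * |v - u| := by gcongr; exact hm c
    _ = |f v - f u| := by rw [hc, ← abs_mul, div_mul_cancel₀ _ hvu]

theorem volume_preimage_Icc_le_of_le_abs_deriv (hf : Differentiable ℝ f) (hm₀ : 0 < m)
    (hm : ∀ x, m ≤ |deriv f x|) (a b : ℝ) :
    volume (f ⁻¹' Icc a b) ≤ ENNReal.ofReal ((b - a) / m) := by
  refine (Real.volume_le_diam _).trans (Metric.ediam_le fun x hx y hy => ?_)
  rw [edist_dist, Real.dist_eq]
  refine ENNReal.ofReal_le_ofReal ((le_div_iff₀ hm₀).2 ?_)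
  have hfxy : |f x - f y| ≤ b - a :=
    abs_sub_le_iff.2 ⟨by linarith [hx.2, hy.1], by linarith [hx.1, hy.2]⟩
  linarith [mul_abs_sub_le_abs_sub_of_le_abs_deriv hf hm y x]

end DerivLowerBound

theorem cdf_lipschitz_in_param_general
    (d : ℕ) (pz : ℝ → ℝ) (Cz Lmax m : ℝ) (hm : 0 < m)
    (hpz_nonneg : ∀ x, 0 ≤ pz x) (hpz_int : Integrable pz)
    (hpz_bdd : ∀ᵐ x ∂(volume : Measure ℝ), pz x ≤ Cz)
    (g : EuclideanSpace ℝ (Fin d) → ℝ → ℝ)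
    (hg_diff : ∀ θ, Differentiable ℝ (g θ))
    (hg_lip : ∀ᵐ z ∂(volume : Measure ℝ),
      ∀ θ θ' : EuclideanSpace ℝ (Fin d), |g θ z - g θ' z| ≤ Lmax * ‖θ - θ'‖)
    (hg_deriv : ∀ (θ : EuclideanSpace ℝ (Fin d)) (z : ℝ), m ≤ |deriv (g θ) z|)
    (y₀ : ℝ) (θ θ' : EuclideanSpace ℝ (Fin d)) :
    |(∫ u in {u : ℝ | g θ u ≤ y₀}, pz u) - ∫ u in {u : ℝ | g θ' u ≤ y₀}, pz u|
      ≤ (Cz * (2 * Lmax) / m) * ‖θ - θ'‖ := by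
  set δ := Lmax * ‖θ - θ'‖
  have hclose : ∀ᵐ z ∂(volume : Measure ℝ), |g θ z - g θ' z| ≤ δ :=
    hg_lip.mono fun z hz => hz θ θ'
  have hδ : 0 ≤ δ := by
    obtain ⟨z, hz⟩ := hclose.exists
    exact (abs_nonneg _).trans hz
  have hpz_abs : ∀ᵐ x ∂(volume : Measure ℝ), ‖pz x‖ ≤ Cz :=
    hpz_bdd.mono fun x hx => by rwa [Real.norm_of_nonneg (hpz_nonneg x)]
  have hCz : 0 ≤ Cz := by
    obtain ⟨x, hx⟩ := hpz_abs.exists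
    exact (norm_nonneg _).trans hx
  have hvol : volume ({u | g θ u ≤ y₀} ∆ {u | g θ' u ≤ y₀}) ≤ ENNReal.ofReal (2 * δ / m) := by
    refine (measure_mono_ae (symmDiff_setOf_le_ae_le_preimage_Icc hclose y₀)).trans ?_
    have := volume_preimage_Icc_le_of_le_abs_deriv (hg_diff θ) hm (hg_deriv θ) (y₀ - δ) (y₀ + δ)
    rwa [show y₀ + δ - (y₀ - δ) = 2 * δ by ring] at this
  have hmeas : ∀ τ, MeasurableSet {u | g τ u ≤ y₀} := fun τ =>
    measurableSet_le (hg_diff τ).continuous.measurable measurable_const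
  calc _ ≤ Cz * volume.real ({u | g θ u ≤ y₀} ∆ {u | g θ' u ≤ y₀}) :=
        norm_setIntegral_sub_setIntegral_le (hmeas θ) (hmeas θ') hpz_int.integrableOn
          hpz_int.integrableOn hpz_abs (ne_top_of_le_ne_top ENNReal.ofReal_ne_top hvol)
    _ ≤ Cz * (2 * δ / m) := by
        gcongr
        exact ENNReal.toReal_le_of_le_ofReal (by positivity) hvol
    _ = (Cz * (2 * Lmax) / m) * ‖θ - θ'‖ := by ring

/-- **Lemma 3 (Lipschitz continuity of the cdf in the parameter).** Let `p_z` be a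
probability density on `ℝ` bounded (a.e.) by `‖p_z‖_{L^∞} ≤ Cz`, and let
`g_θ : ℝ → ℝ` be differentiable in `z`, satisfy the Lipschitz condition
`|g_θ(z) - g_{θ'}(z)| ≤ L_max ‖θ - θ'‖` for almost every `z`, and
`inf_{(z,θ)} |g_θ'(z)| ≥ m > 0`. Then for every `y₀` and all `θ, θ'`,
`|F̃_θ(y₀) - F̃_{θ'}(y₀)| ≤ L₁ ‖θ - θ'‖` with `L₁ = ‖p_z‖_{L^∞} · 2 L_max / m`,
where `F̃_θ(y₀) = ∫ 𝟙{g_θ(u) ≤ y₀} p_z(u) du` is the cdf of `g_θ(z)`. -/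
theorem cdf_lipschitz_in_param
    (d : ℕ) (pz : ℝ → ℝ) (Cz Lmax m : ℝ) (hm : 0 < m)
    (hpz_nonneg : ∀ x, 0 ≤ pz x) (hpz_int : Integrable pz)
    (hpz_one : ∫ x, pz x = 1)
    (hpz_bdd : ∀ᵐ x ∂(volume : Measure ℝ), pz x ≤ Cz)
    (g : EuclideanSpace ℝ (Fin d) → ℝ → ℝ)
    (hg_diff : ∀ θ, Differentiable ℝ (g θ))
    (hg_lip : ∀ᵐ z ∂(volume : Measure ℝ),
      ∀ θ θ' : EuclideanSpace ℝ (Fin d), |g θ z - g θ' z| ≤ Lmax * ‖θ - θ'‖)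
    (hg_deriv : ∀ (θ : EuclideanSpace ℝ (Fin d)) (z : ℝ), m ≤ |deriv (g θ) z|)
    (y₀ : ℝ) (θ θ' : EuclideanSpace ℝ (Fin d)) :
    |(∫ u in {u : ℝ | g θ u ≤ y₀}, pz u) - ∫ u in {u : ℝ | g θ' u ≤ y₀}, pz u|
      ≤ (Cz * (2 * Lmax) / m) * ‖θ - θ'‖ :=
  cdf_lipschitz_in_param_general d pz Cz Lmax m hm hpz_nonneg hpz_int hpz_bdd g hg_diff hg_lip
    hg_deriv y₀ θ θ'
end
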